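/- arXiv:1602.05463 — 2 statements merged into one kernel-verified Lean document; each statement's English description precedes it below -/
import Mathlib

section
/- For integers x, y with gcd(x, y) = 1 and x ≠ y, and a positive integer n, the gcd of x - y and x^{n-1} + x^{n-2}y + ... + x y^{n-2} + y^{n-1} equals the gcd of x - y and n. -/
/-! Modulo `x - y` we have `x ≡ y`, so the sum is congruent to `n * x ^ (n - 1)`; since `x - y` is
coprime to `x`, the factor `x ^ (n - 1)` does not affect the gcd with `x - y`. -/

open Finset

theorem sub_dvd_geom_sum₂_sub_natCast_mul_pow {R : Type*} [CommRing R] (x y : R) (n : ℕ) :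
    x - y ∣ ∑ i ∈ range n, x ^ i * y ^ (n - 1 - i) - n * x ^ (n - 1) := by
  have hxy : Ideal.Quotient.mk (Ideal.span {x - y}) x = Ideal.Quotient.mk _ y :=
    Ideal.Quotient.eq.mpr (Ideal.mem_span_singleton_self _)
  rw [← Ideal.mem_span_singleton, ← Ideal.Quotient.eq_zero_iff_mem]
  simp [hxy, geom_sum₂_self]

theorem Int.gcd_eq_of_dvd_sub_right {a b c : ℤ} (h : a ∣ b - c) : a.gcd b = a.gcd c := by
  obtain ⟨k, hk⟩ := h
  rw [← sub_add_cancel b c, hk, Int.gcd_mul_left_add_right]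

theorem Int.gcd_mul_right_cancel_right_of_isCoprime {a c : ℤ} (b : ℤ) (h : IsCoprime a c) :
    a.gcd (b * c) = a.gcd b := by
  rw [Int.gcd, Int.gcd, Int.natAbs_mul]
  exact Nat.Coprime.gcd_mul_right_cancel_right _ (Int.isCoprime_iff_gcd_eq_one.mp h.symm)

theorem IsCoprime.sub_self_left {R : Type*} [CommRing R] {x y : R} (h : IsCoprime x y) :
    IsCoprime (x - y) x := by
  simpa using (IsCoprime.mul_sub_left_left_iff (z := 1)).mpr h.symm

theorem stmt_2_general (x y : ℤ) (h : IsCoprime x y) (n : ℕ) :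
    Int.gcd (x - y) (∑ i ∈ Finset.range n, x ^ i * y ^ (n - 1 - i)) =
      Int.gcd (x - y) (n : ℤ) := by
  rw [Int.gcd_eq_of_dvd_sub_right (sub_dvd_geom_sum₂_sub_natCast_mul_pow x y n),
    Int.gcd_mul_right_cancel_right_of_isCoprime _ h.sub_self_left.pow_right]

theorem stmt_2 (x y : ℤ) (h : IsCoprime x y) (hxy : x ≠ y) (n : ℕ) (hn : 0 < n) :
    Int.gcd (x - y) (∑ i ∈ Finset.range n, x ^ i * y ^ (n - 1 - i)) =
      Int.gcd (x - y) (n : ℤ) :=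
  stmt_2_general x y h n
end

section
/- Let a, b, n be positive integers with b < a ≤ 2b, and x, y positive integers with y < x ≤ 2y. If |(a/b)^{1/n} - x/y| ≤ 1 then 4^n · |(a/b)^{1/n} - x/y| ≥ |a/b - (x/y)^n|. -/
/-!
Both `r = (a/b)^{1/n}` and `s = x/y` lie in `[0, 2]`, so factoring
`r^n - s^n = (r - s) · ∑ r^i s^{n-1-i}` bounds `|r^n - s^n|` by `n 2^{n-1} |r - s| ≤ 4^n |r - s|`.
-/

lemma Nat.mul_two_pow_pred_le_four_pow (n : ℕ) : n * 2 ^ (n - 1) ≤ 4 ^ n :=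
  calc n * 2 ^ (n - 1) ≤ 2 ^ n * 2 ^ n :=
        Nat.mul_le_mul n.lt_two_pow_self.le (Nat.pow_le_pow_right two_pos (n.sub_le 1))
    _ = 4 ^ n := by rw [← mul_pow]; rfl

lemma abs_pow_sub_pow_le_four_pow {α : Type*} [CommRing α] [LinearOrder α] [IsStrictOrderedRing α]
    {r s : α} (hr : |r| ≤ 2) (hs : |s| ≤ 2) (n : ℕ) :
    |r ^ n - s ^ n| ≤ 4 ^ n * |r - s| :=
  calc |r ^ n - s ^ n| ≤ |r - s| * n * max |r| |s| ^ (n - 1) := abs_pow_sub_pow_le r s n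
    _ ≤ |r - s| * n * 2 ^ (n - 1) := by gcongr; exact max_le hr hs
    _ = (n * 2 ^ (n - 1) : ℕ) * |r - s| := by push_cast; ring
    _ ≤ 4 ^ n * |r - s| := by
        gcongr
        exact_mod_cast Nat.mul_two_pow_pred_le_four_pow n

lemma abs_natCast_div_le_two {p q : ℕ} (h : p ≤ 2 * q) : |(p : ℝ) / q| ≤ 2 := by
  rw [abs_of_nonneg (by positivity)]
  exact div_le_of_le_mul₀ q.cast_nonneg zero_le_two (by exact_mod_cast h)

lemma Real.abs_rpow_one_div_le_two {x : ℝ} (hx₀ : 0 ≤ x) (hx₂ : x ≤ 2) (n : ℕ) :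
    |x ^ ((1 : ℝ) / n)| ≤ 2 := by
  have h₀ : (0 : ℝ) ≤ 1 / n := by positivity
  rw [abs_of_nonneg (Real.rpow_nonneg hx₀ _)]
  calc x ^ ((1 : ℝ) / n) ≤ 2 ^ ((1 : ℝ) / n) := Real.rpow_le_rpow hx₀ hx₂ h₀
    _ ≤ 2 := Real.rpow_le_self_of_one_le one_le_two (by simpa using n.cast_inv_le_one)

theorem stmt_7_general (a b n x y : ℕ) (ha2b : a ≤ 2 * b)
    (hn : 0 < n) (hx2y : x ≤ 2 * y) :
    |(a : ℝ) / b - ((x : ℝ) / y) ^ n| ≤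
      4 ^ n * |((a : ℝ) / b) ^ ((1 : ℝ) / n) - (x : ℝ) / y| := by
  have hq : (0 : ℝ) ≤ a / b := by positivity
  have hpow : (((a : ℝ) / b) ^ ((1 : ℝ) / n)) ^ n = a / b := by
    rw [one_div, Real.rpow_inv_natCast_pow hq hn.ne']
  have hq₂ : (a : ℝ) / b ≤ 2 := le_of_abs_le (abs_natCast_div_le_two ha2b)
  conv_lhs => rw [← hpow]
  exact abs_pow_sub_pow_le_four_pow (Real.abs_rpow_one_div_le_two hq hq₂ n)
    (abs_natCast_div_le_two hx2y) n

theorem stmt_7 (a b n x y : ℕ) (hb : 0 < b) (hba : b < a) (ha2b : a ≤ 2 * b)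
    (hn : 0 < n) (hy : 0 < y) (hyx : y < x) (hx2y : x ≤ 2 * y)
    (h : |((a : ℝ) / b) ^ ((1 : ℝ) / n) - (x : ℝ) / y| ≤ 1) :
    |(a : ℝ) / b - ((x : ℝ) / y) ^ n| ≤
      4 ^ n * |((a : ℝ) / b) ^ ((1 : ℝ) / n) - (x : ℝ) / y| :=
  stmt_7_general a b n x y ha2b hn hx2y
end
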